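/- (Correctness of the reduction in Theorem 2.) The 3SAT instance φ is satisfiable if and only if there exists an assignment α : {1,…,n} → {true,false} such that for every clause index j ∈ {1,…,m} there is a directed s-t path in G_φ that follows α and has total cost 0 under c^j. -/

import Mathlib

/-- Vertices of the graph `G_φ`: source `s`, sink `t`, and for each variable index
`i ∈ {1,…,n}` the four vertices `tᵢ¹, tᵢ², fᵢ¹, fᵢ²`.  Here `Vtx.mid i second isTrue`
is `tᵢ` if `isTrue = true`, `fᵢ` if `isTrue = false`; superscript `2` iff `second = true`. -/
inductive Vtx (n : ℕ) : Type where
  | s : Vtx n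
  | t : Vtx n
  | mid (i : Fin n) (second : Bool) (isTrue : Bool) : Vtx n
deriving DecidableEq

/-- The directed edges of `G_φ`. -/
def GEdge (n : ℕ) : Vtx n → Vtx n → Prop :=
  fun a b =>
    match a, b with
    | .s, .mid i false _ => (i : ℕ) = 0
    | .mid i false _, .mid j false _ => (j : ℕ) = (i : ℕ) + 1
    | .mid i true _, .mid j true _ => (j : ℕ) = (i : ℕ) + 1
    | .mid i false v, .mid j true w => j = i ∧ w = v
    | .mid i true _, .t => (i : ℕ) = n - 1
    | _, _ => False

/-- The edge costs `c^j` determined by a clause `C` (a set of literals `(i, ε)`):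
a bridge edge `(tᵢ¹,tᵢ²)` (resp. `(fᵢ¹,fᵢ²)`) costs `0` if `(i,true) ∈ C`
(resp. `(i,false) ∈ C`) and `1` otherwise; all non-bridge edges cost `0`. -/
def cost (n : ℕ) (C : Finset (Fin n × Bool)) : Vtx n → Vtx n → ℕ
  | .mid i false v, .mid j true w =>
      if j = i ∧ w = v then (if (i, v) ∈ C then 0 else 1) else 0
  | _, _ => 0

/-- The cost of a path (list of vertices) under the scenario of clause `C`:
the sum of the edge costs over consecutive pairs. -/
def pathCost (n : ℕ) (C : Finset (Fin n × Bool)) (P : List (Vtx n)) : ℕ :=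
  ((P.zip P.tail).map fun q => cost n C q.1 q.2).sum

/-- A directed `s`-`t` path in `G_φ`: consecutive pairs are edges, vertices are
pairwise distinct, the first vertex is `s` and the last is `t`. -/
def isSTPath (n : ℕ) (P : List (Vtx n)) : Prop :=
  P.Chain' (GEdge n) ∧ P.Nodup ∧ P.head? = some Vtx.s ∧ P.getLast? = some Vtx.t

/-- A path follows the assignment `α` if for every index `i`, each of its vertices with
index `i` is a `t`-vertex when `α i = true` and an `f`-vertex when `α i = false`. -/
def follows (n : ℕ) (α : Fin n → Bool) (P : List (Vtx n)) : Prop :=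
  ∀ (i : Fin n) (second v : Bool), Vtx.mid i second v ∈ P → v = α i

/-- The assignment `α` satisfies the clause `C` if it makes some literal of `C` true. -/
def satisfiesClause (n : ℕ) (α : Fin n → Bool) (C : Finset (Fin n × Bool)) : Prop :=
  ∃ l ∈ C, α l.1 = l.2

/-!
An `s`-`t` path starts in the first layer and ends in the second, so it uses a bridge edge
`(vᵢ¹, vᵢ²)`; if the path follows `α` then `v = α i`, and if it has cost `0` under `c^j` then
`(i, v) ∈ C_j`, so `α` satisfies `C_j`. Conversely, if `(i, α i) ∈ C_j`, the path along the
first layer up to index `i`, across that bridge and along the second layer follows `α` and has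
cost `0`. So for each fixed `α` the two conditions agree clause by clause.
-/

theorem List.isChain_iff_forall_mem_zip_tail {α : Type*} {R : α → α → Prop} {l : List α} :
    l.IsChain R ↔ ∀ q ∈ l.zip l.tail, R q.1 q.2 := by
  induction l using List.twoStepInduction <;> simp_all

theorem List.exists_mem_zip_tail_of_head_of_getLast {α : Type*} {p : α → Prop} {l : List α}
    {a b : α} (ha : l.head? = some a) (hpa : p a) (hb : l.getLast? = some b) (hpb : ¬ p b) :
    ∃ q ∈ l.zip l.tail, p q.1 ∧ ¬ p q.2 := by
  induction l generalizing a with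
  | nil => simp at ha
  | cons c l ih =>
    obtain rfl : c = a := by simpa using ha
    rcases l with _ | ⟨d, l⟩
    · obtain rfl : c = b := by simpa using hb
      exact absurd hpa hpb
    by_cases hpd : p d
    · obtain ⟨q, hq, hcross⟩ := ih rfl hpd (by simpa using hb)
      exact ⟨q, List.mem_cons_of_mem _ hq, hcross⟩
    · exact ⟨(c, d), List.mem_cons_self, hpa, hpd⟩

section Reduction

variable {n : ℕ}

theorem pathCost_eq_zero_iff {C : Finset (Fin n × Bool)} {P : List (Vtx n)} :
    pathCost n C P = 0 ↔ P.IsChain (fun a b => cost n C a b = 0) := by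
  rw [pathCost, List.sum_eq_zero_iff, List.forall_mem_map, List.isChain_iff_forall_mem_zip_tail]

theorem cost_bridge_eq_zero_iff {C : Finset (Fin n × Bool)} {i : Fin n} {v : Bool} :
    cost n C (.mid i false v) (.mid i true v) = 0 ↔ (i, v) ∈ C := by
  simp [cost]

namespace Vtx

def rank : Vtx n → ℕ
  | s => 0
  | t => n + 2
  | mid i false _ => i + 1
  | mid i true _ => i + 2

def BeforeBridge : Vtx n → Prop
  | s => True
  | t => False
  | mid _ second _ => second = false

end Vtx

theorem GEdge.rank_eq {a b : Vtx n} (h : GEdge n a b) : b.rank = a.rank + 1 := by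
  rcases a with _ | _ | ⟨i, _ | _, v⟩ <;> rcases b with _ | _ | ⟨j, _ | _, w⟩ <;>
    simp_all [GEdge, Vtx.rank]
  omega

theorem GEdge.exists_bridge {a b : Vtx n} (h : GEdge n a b) (ha : a.BeforeBridge)
    (hb : ¬ b.BeforeBridge) : ∃ i v, a = .mid i false v ∧ b = .mid i true v := by
  rcases a with _ | _ | ⟨i, _ | _, v⟩ <;> rcases b with _ | _ | ⟨j, _ | _, w⟩ <;>
    simp_all [GEdge, Vtx.BeforeBridge]

theorem nodup_of_isChain_gEdge {P : List (Vtx n)} (hP : P.IsChain (GEdge n)) : P.Nodup := by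
  have hrank : (P.map Vtx.rank).IsChain (· < ·) :=
    List.isChain_map_of_isChain _ (fun a b h => by rw [h.rank_eq]; omega) hP
  exact List.Nodup.of_map _ (hrank.pairwise.imp ne_of_lt)

theorem satisfiesClause_of_isSTPath {α : Fin n → Bool} {C : Finset (Fin n × Bool)}
    {P : List (Vtx n)} (hP : isSTPath n P) (hα : follows n α P) (hC : pathCost n C P = 0) :
    satisfiesClause n α C := by
  obtain ⟨hedge, -, hs, ht⟩ := hP
  obtain ⟨⟨a, b⟩, hab, ha, hb⟩ := List.exists_mem_zip_tail_of_head_of_getLast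
    (p := Vtx.BeforeBridge) hs trivial ht id
  obtain ⟨i, v, rfl, rfl⟩ :=
    (List.isChain_iff_forall_mem_zip_tail.1 hedge _ hab).exists_bridge ha hb
  have hcost := List.isChain_iff_forall_mem_zip_tail.1 (pathCost_eq_zero_iff.1 hC) _ hab
  exact ⟨(i, v), cost_bridge_eq_zero_iff.1 hcost, (hα i false v (List.of_mem_zip hab).1).symm⟩

/-- The vertex of rank `k` on the path that follows `α` and crosses to the second layer at
index `i`. -/
def bridgeVertex (α : Fin n → Bool) (i : Fin n) (k : ℕ) : Vtx n :=
  if k = 0 then .s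
  else if h : k ≤ i + 1 then .mid ⟨k - 1, by omega⟩ false (α ⟨k - 1, by omega⟩)
  else if h : k ≤ n + 1 then .mid ⟨k - 2, by omega⟩ true (α ⟨k - 2, by omega⟩)
  else .t

def bridgePath (α : Fin n → Bool) (i : Fin n) : List (Vtx n) :=
  (List.range (n + 3)).map (bridgeVertex α i)

section bridgePath

variable (α : Fin n → Bool) (i : Fin n)

theorem gEdge_bridgeVertex {k : ℕ} (hk : k < n + 2) :
    GEdge n (bridgeVertex α i k) (bridgeVertex α i (k + 1)) := by
  unfold bridgeVertex
  split_ifs <;> simp_all [GEdge] <;> omega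

theorem cost_bridgeVertex {C : Finset (Fin n × Bool)} (hC : (i, α i) ∈ C) (k : ℕ) :
    cost n C (bridgeVertex α i k) (bridgeVertex α i (k + 1)) = 0 := by
  unfold bridgeVertex
  split_ifs <;> simp_all [cost]
  obtain rfl : k = i + 1 := by omega
  simpa using hC

theorem isChain_bridgePath {R : Vtx n → Vtx n → Prop}
    (hR : ∀ k < n + 2, R (bridgeVertex α i k) (bridgeVertex α i (k + 1))) :
    (bridgePath α i).IsChain R :=
  (List.isChain_map _).2 ((List.isChain_range_succ _ _).2 hR)

theorem isSTPath_bridgePath : isSTPath n (bridgePath α i) := by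
  have hedge := isChain_bridgePath α i fun k hk => gEdge_bridgeVertex α i hk
  refine ⟨hedge, nodup_of_isChain_gEdge hedge, ?_, ?_⟩
  · simp [bridgePath, List.head?_range, bridgeVertex]
  · simp [bridgePath, List.getLast?_range, bridgeVertex]

theorem follows_bridgePath : follows n α (bridgePath α i) := by
  intro j second v hv
  obtain ⟨k, -, hk⟩ := List.mem_map.1 hv
  unfold bridgeVertex at hk
  split_ifs at hk <;> cases hk <;> rfl

theorem pathCost_bridgePath {C : Finset (Fin n × Bool)} (hC : (i, α i) ∈ C) :
    pathCost n C (bridgePath α i) = 0 :=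
  pathCost_eq_zero_iff.2 (isChain_bridgePath α i fun k _ => cost_bridgeVertex α i hC k)

end bridgePath

theorem satisfiesClause_iff_exists_path {α : Fin n → Bool} {C : Finset (Fin n × Bool)} :
    satisfiesClause n α C ↔
      ∃ P : List (Vtx n), isSTPath n P ∧ follows n α P ∧ pathCost n C P = 0 := by
  refine ⟨?_, fun ⟨P, hP, hα, hC⟩ => satisfiesClause_of_isSTPath hP hα hC⟩
  rintro ⟨⟨i, _⟩, hC, rfl : α i = _⟩
  exact ⟨bridgePath α i, isSTPath_bridgePath α i, follows_bridgePath α i,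
    pathCost_bridgePath α i hC⟩

end Reduction

theorem stmt8_general (n m : ℕ)
    (C : Fin m → Finset (Fin n × Bool)) :
    (∃ α : Fin n → Bool, ∀ j : Fin m, satisfiesClause n α (C j)) ↔
    (∃ α : Fin n → Bool, ∀ j : Fin m,
        ∃ P : List (Vtx n), isSTPath n P ∧ follows n α P ∧ pathCost n (C j) P = 0) :=
  exists_congr fun _ => forall_congr' fun _ => satisfiesClause_iff_exists_path

/-- Correctness of the reduction: the 3SAT instance `φ = (C₁,…,C_m)` is satisfiable iff
there is an assignment `α` such that for every clause index `j` there is a directed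
`s`-`t` path in `G_φ` following `α` with total cost `0` under `c^j`. -/
theorem stmt8 (n m : ℕ) (hn : 1 ≤ n) (hm : 1 ≤ m)
    (C : Fin m → Finset (Fin n × Bool)) (hC : ∀ j, (C j).card ≤ 3) :
    (∃ α : Fin n → Bool, ∀ j : Fin m, satisfiesClause n α (C j)) ↔
    (∃ α : Fin n → Bool, ∀ j : Fin m,
        ∃ P : List (Vtx n), isSTPath n P ∧ follows n α P ∧ pathCost n (C j) P = 0) :=
  stmt8_general n m C
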